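/- For integers m ≥ 0 and n, k, s, t ≥ 1, one has x₀^m ш (x₀^n x₁^k x₀^s x₁^t) = Σ_{m₁+m₂+m₃+m₄=m, m_i ≥ 0} C(m₁+n-1, n-1) · C(m₃+s-1, s-1) · x₀^{m₁+n} 𝔅_{k}^{m₂} x₁ x₀^{m₃+s} 𝔅_{t+1}^{m₄}, an identity of multisets of words, where a binomial coefficient c multiplying a multiset means the multiset repeated c times. -/

import Mathlib

/-- The shuffle product of two words, as a multiset of words. -/
def shuffle {X : Type*} : List X → List X → Multiset (List X)
  | u, [] => {u}
  | [], v => {v}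
  | a :: u, b :: v =>
      (shuffle u (b :: v)).map (a :: ·) + (shuffle (a :: u) v).map (b :: ·)
termination_by u v => u.length + v.length

/-- The two-letter alphabet `X = {x₀, x₁}`. -/
def x0 : Bool := false
def x1 : Bool := true

/-- `𝔅_r^m`: the multiset of all words `x₀^{m₁} x₁ x₀^{m₂} x₁ ⋯ x₁ x₀^{m_r}`
with `m₁ + ⋯ + m_r = m`, `m_i ≥ 0`. -/
def B (r m : ℕ) : Multiset (List Bool) :=
  (Finset.Nat.antidiagonalTuple r m).val.map fun f =>
    List.intercalate [x1] (List.ofFn fun i => List.replicate (f i) x0)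

/-- `S w T`: the multiset of all concatenations `u ++ w ++ v` with `u ∈ S`, `v ∈ T`,
counted with multiplicity. -/
def msConcat {X : Type*} (S : Multiset (List X)) (w : List X) (T : Multiset (List X)) :
    Multiset (List X) :=
  S.bind fun u => T.map fun v => u ++ w ++ v

/-!
Every shuffle of `x₀^m` into a word `u x v` is determined by how many of the inserted `x₀`'s land
before the distinguished letter `x`, so `x₀^m ш u x v = Σ_{a+b=m} (x₀^a ш u) x (x₀^b ш v)`.
Splitting `x₀^n x₁^k x₀^s x₁^t` at the last letter of each of its first three blocks leaves the
pieces `x₀^a ш x₀^{n-1} = C(a+n-1, n-1) x₀^{a+n-1}` and `x₀^a ш x₁^j = 𝔅_{j+1}^a`.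
-/

open Finset

theorem Finset.Nat.sum_antidiagonal_antidiagonal_fst {M : Type*} [AddCommMonoid M] (m : ℕ)
    (f : ℕ → ℕ → ℕ → M) :
    ∑ p ∈ antidiagonal m, ∑ q ∈ antidiagonal p.1, f q.1 q.2 p.2 =
      ∑ p ∈ antidiagonal m, ∑ q ∈ antidiagonal p.2, f p.1 q.1 q.2 := by
  rw [sum_sigma', sum_sigma']
  refine sum_nbij' (fun x => ⟨(x.2.1, x.2.2 + x.1.2), (x.2.2, x.1.2)⟩)
    (fun y => ⟨(y.1.1 + y.2.1, y.2.2), (y.1.1, y.2.1)⟩) ?_ ?_ ?_ ?_ ?_ <;>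
    rintro ⟨⟨a, b⟩, ⟨c, d⟩⟩ h <;>
    simp only [mem_sigma, HasAntidiagonal.mem_antidiagonal] at h ⊢ <;>
    simp_all <;> omega

theorem Finset.Nat.sum_antidiagonalTuple_succ {M : Type*} [AddCommMonoid M] (k n : ℕ)
    (g : (Fin (k + 1) → ℕ) → M) :
    ∑ f ∈ antidiagonalTuple (k + 1) n, g f =
      ∑ p ∈ antidiagonal n, ∑ f ∈ antidiagonalTuple k p.2, g (Fin.cons p.1 f) := by
  -- `List.Nat.antidiagonalTuple (k + 1)` is defined by prepending the first entry.
  change ((List.Nat.antidiagonalTuple (k + 1) n : Multiset (Fin (k + 1) → ℕ)).map g).sum =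
    (((List.Nat.antidiagonal n : List (ℕ × ℕ)) : Multiset (ℕ × ℕ)).map fun p =>
      ((List.Nat.antidiagonalTuple k p.2 : Multiset (Fin k → ℕ)).map
        fun f => g (Fin.cons p.1 f)).sum).sum
  simp [List.Nat.antidiagonalTuple, List.flatMap, List.sum_flatten, Function.comp_def]

theorem Multiset.map_finsetSum {α β ι : Type*} (f : α → β) (s : Finset ι)
    (S : ι → Multiset α) :
    (∑ i ∈ s, S i).map f = ∑ i ∈ s, (S i).map f :=
  map_sum (Multiset.mapAddMonoidHom f) S s

section Shuffle

variable {X : Type*}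

@[simp]
theorem shuffle_nil_left (v : List X) : shuffle [] v = {v} := by
  cases v <;> simp [shuffle]

@[simp]
theorem shuffle_nil_right (u : List X) : shuffle u [] = {u} := by
  cases u <;> simp [shuffle]

theorem shuffle_cons_cons (a b : X) (u v : List X) :
    shuffle (a :: u) (b :: v) =
      (shuffle u (b :: v)).map (a :: ·) + (shuffle (a :: u) v).map (b :: ·) := by
  rw [shuffle]

end Shuffle

section MsConcat

variable {X ι : Type*} (w : List X) (S T : Multiset (List X))

theorem msConcat_singleton_left (u : List X) : msConcat {u} w T = T.map (u ++ w ++ ·) :=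
  Multiset.singleton_bind _ _

theorem msConcat_add_left (S₁ S₂ : Multiset (List X)) :
    msConcat (S₁ + S₂) w T = msConcat S₁ w T + msConcat S₂ w T :=
  Multiset.add_bind _ _ _

theorem msConcat_add_right (T₁ T₂ : Multiset (List X)) :
    msConcat S w (T₁ + T₂) = msConcat S w T₁ + msConcat S w T₂ := by
  simp only [msConcat, Multiset.map_add, Multiset.bind_add]

def msConcatLeftHom : Multiset (List X) →+ Multiset (List X) :=
  ⟨⟨(msConcat · w T), Multiset.zero_bind _⟩, msConcat_add_left w T⟩

def msConcatRightHom : Multiset (List X) →+ Multiset (List X) :=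
  ⟨⟨(msConcat S w ·), by simp [msConcat]⟩, msConcat_add_right w S⟩

theorem msConcat_sum_left (s : Finset ι) (S : ι → Multiset (List X)) :
    msConcat (∑ i ∈ s, S i) w T = ∑ i ∈ s, msConcat (S i) w T :=
  map_sum (msConcatLeftHom w T) S s

theorem msConcat_sum_right (s : Finset ι) (T : ι → Multiset (List X)) :
    msConcat S w (∑ i ∈ s, T i) = ∑ i ∈ s, msConcat S w (T i) :=
  map_sum (msConcatRightHom w S) T s

theorem msConcat_nsmul_left (c : ℕ) : msConcat (c • S) w T = c • msConcat S w T :=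
  map_nsmul (msConcatLeftHom w T) c S

theorem msConcat_nsmul_right (c : ℕ) : msConcat S w (c • T) = c • msConcat S w T :=
  map_nsmul (msConcatRightHom w S) c T

theorem msConcat_assoc (w' : List X) (U : Multiset (List X)) :
    msConcat S w (msConcat T w' U) = msConcat (msConcat S w T) w' U := by
  simp [msConcat, Multiset.map_bind, Multiset.bind_map, Multiset.bind_assoc, Multiset.map_map]

end MsConcat

section ShuffleReplicate

variable {X : Type*} (c : X)

theorem shuffle_replicate_cons (x : X) (v : List X) (m : ℕ) :
    shuffle (List.replicate m c) (x :: v) =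
      ∑ p ∈ antidiagonal m,
        msConcat {List.replicate p.1 c} [x] (shuffle (List.replicate p.2 c) v) := by
  induction m with
  | zero => simp [msConcat_singleton_left]
  | succ m ih =>
    rw [List.replicate_succ, shuffle_cons_cons, ih, Nat.sum_antidiagonal_succ, add_comm]
    simp [msConcat_singleton_left, Multiset.map_finsetSum, Multiset.map_map, List.replicate_succ]

theorem shuffle_replicate_append_cons (u : List X) (x : X) (v : List X) (m : ℕ) :
    shuffle (List.replicate m c) (u ++ x :: v) =
      ∑ p ∈ antidiagonal m,
        msConcat (shuffle (List.replicate p.1 c) u) [x] (shuffle (List.replicate p.2 c) v) := by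
  induction u generalizing m with
  | nil => simp [shuffle_replicate_cons]
  | cons y u ih =>
    simp only [List.cons_append, shuffle_replicate_cons, ih, msConcat_sum_right, msConcat_sum_left,
      msConcat_assoc]
    exact (Nat.sum_antidiagonal_antidiagonal_fst m fun a b d =>
      msConcat (msConcat {List.replicate a c} [y] (shuffle (List.replicate b c) u)) [x]
        (shuffle (List.replicate d c) v)).symm

theorem shuffle_replicate_replicate (a b : ℕ) :
    shuffle (List.replicate a c) (List.replicate b c) =
      (a + b).choose a • {List.replicate (a + b) c} := by
  induction a generalizing b with
  | zero => simp
  | succ a iha =>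
    induction b with
    | zero => simp
    | succ b ihb =>
      rw [List.replicate_succ, List.replicate_succ, shuffle_cons_cons, ← List.replicate_succ,
        ← List.replicate_succ, iha, ihb, show a + (b + 1) = a + b + 1 by omega,
        show a + 1 + b = a + b + 1 by omega, show a + 1 + (b + 1) = a + b + 1 + 1 by omega,
        Nat.choose_succ_succ' (a + b + 1), add_smul]
      simp [Multiset.map_nsmul, List.replicate_succ]

end ShuffleReplicate

theorem B_eq_sum (r m : ℕ) :
    B r m = ∑ f ∈ Nat.antidiagonalTuple r m,
      {List.intercalate [x1] (List.ofFn fun i => List.replicate (f i) x0)} := by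
  rw [B, Finset.sum, ← Multiset.sum_map_singleton (Multiset.map _ _), Multiset.map_map]
  rfl

theorem B_one (m : ℕ) : B 1 m = {List.replicate m x0} := by
  simp [B_eq_sum]

theorem B_succ {r : ℕ} (hr : r ≠ 0) (m : ℕ) :
    B (r + 1) m = ∑ p ∈ antidiagonal m, msConcat {List.replicate p.1 x0} [x1] (B r p.2) := by
  obtain ⟨r, rfl⟩ := Nat.exists_eq_succ_of_ne_zero hr
  simp [B_eq_sum, Nat.sum_antidiagonalTuple_succ, msConcat_sum_right, msConcat_singleton_left,
    List.ofFn_succ, List.intercalate_cons_cons]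

theorem shuffle_replicate_x0_replicate_x1 (m t : ℕ) :
    shuffle (List.replicate m x0) (List.replicate t x1) = B (t + 1) m := by
  induction t generalizing m with
  | zero => simp [B_one]
  | succ t ih => simp [List.replicate_succ, shuffle_replicate_cons, ih, B_succ]

theorem shuffle_x0_pow_x0x1x0x1_general (m n k s t : ℕ)
    (hn : 1 ≤ n) (hk : 1 ≤ k) (hs : 1 ≤ s) :
    shuffle (List.replicate m x0)
        (List.replicate n x0 ++ List.replicate k x1 ++ List.replicate s x0 ++
          List.replicate t x1) =
      ∑ f ∈ Finset.Nat.antidiagonalTuple 4 m,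
        (Nat.choose (f 0 + n - 1) (n - 1) * Nat.choose (f 2 + s - 1) (s - 1)) •
          ((B k (f 1)).bind fun u => (B (t + 1) (f 3)).map fun v =>
            List.replicate (f 0 + n) x0 ++ u ++ [x1] ++ List.replicate (f 2 + s) x0 ++ v) := by
  obtain ⟨n, rfl⟩ := Nat.exists_eq_add_of_le' hn
  obtain ⟨k, rfl⟩ := Nat.exists_eq_add_of_le' hk
  obtain ⟨s, rfl⟩ := Nat.exists_eq_add_of_le' hs
  have hword : List.replicate (n + 1) x0 ++ List.replicate (k + 1) x1 ++
      List.replicate (s + 1) x0 ++ List.replicate t x1 =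
      List.replicate n x0 ++ x0 :: (List.replicate k x1 ++ x1 ::
        (List.replicate s x0 ++ x0 :: List.replicate t x1)) := by
    simp [List.replicate_succ']
  rw [hword]
  simp only [shuffle_replicate_append_cons, shuffle_replicate_replicate,
    shuffle_replicate_x0_replicate_x1, msConcat_sum_right, msConcat_nsmul_left,
    msConcat_nsmul_right, Nat.sum_antidiagonalTuple_succ, Nat.antidiagonalTuple_one, sum_singleton]
  refine sum_congr rfl fun p _ => sum_congr rfl fun q _ => sum_congr rfl fun r _ => ?_
  simp only [msConcat, Multiset.singleton_bind, smul_smul, Nat.choose_symm_add,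
    mul_comm ((r.1 + s).choose s)]
  congr 1
  simp [Multiset.map_bind, ← add_assoc, List.replicate_succ']

theorem shuffle_x0_pow_x0x1x0x1 (m n k s t : ℕ)
    (hn : 1 ≤ n) (hk : 1 ≤ k) (hs : 1 ≤ s) (ht : 1 ≤ t) :
    shuffle (List.replicate m x0)
        (List.replicate n x0 ++ List.replicate k x1 ++ List.replicate s x0 ++
          List.replicate t x1) =
      ∑ f ∈ Finset.Nat.antidiagonalTuple 4 m,
        (Nat.choose (f 0 + n - 1) (n - 1) * Nat.choose (f 2 + s - 1) (s - 1)) •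
          ((B k (f 1)).bind fun u => (B (t + 1) (f 3)).map fun v =>
            List.replicate (f 0 + n) x0 ++ u ++ [x1] ++ List.replicate (f 2 + s) x0 ++ v) :=
  shuffle_x0_pow_x0x1x0x1_general m n k s t hn hk hs
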